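/- arXiv:1903.02126 — 2 statements merged into one kernel-verified Lean document; each statement's English description precedes it below -/
import Mathlib

section
/- Under the no-arbitrage condition ψ⁻(y) − ψ⁺(x) ≤ c(x,y) for all x,y ∈ ∂Ω, if π ∈ 𝒫₀(μ⁺,μ⁻) and π̃ := π restricted to the complement of ∂Ω × ∂Ω, then π̃ ∈ 𝒫₀(μ⁺,μ⁻) and the total tariff cost of π̃ is at most that of π: ∫ c dπ̃ + ∫_{∂Ω} ψ⁺ dπ̃_x − ∫_{∂Ω} ψ⁻ dπ̃_y ≤ ∫ c dπ + ∫_{∂Ω} ψ⁺ dπ_x − ∫_{∂Ω} ψ⁻ dπ_y. -/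
open MeasureTheory Set

noncomputable section

abbrev Euc (d : ℕ) := EuclideanSpace ℝ (Fin d)

variable {d : ℕ}

/-- The admissible set `𝒫₀(μ⁺,μ⁻)`: finite positive measures on `Ω × Ω` whose first
marginal restricted to the interior of `Ω` is `μ⁺` and whose second marginal restricted to
the interior of `Ω` is `μ⁻` (the boundary parts of the marginals are free). -/
def P0 (Ω : Set (Euc d)) (μp μm : Measure (Euc d)) : Set (Measure (Euc d × Euc d)) :=
  {π | IsFiniteMeasure π ∧ π ((Ω ×ˢ Ω)ᶜ) = 0 ∧
    (π.map Prod.fst).restrict (interior Ω) = μp ∧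
    (π.map Prod.snd).restrict (interior Ω) = μm}

/-- Total cost with boundary tariffs:
`∫ c dπ + ∫_{∂Ω} ψ⁺ dπ_x − ∫_{∂Ω} ψ⁻ dπ_y`. -/
def tariffCost (Ω : Set (Euc d)) (c : Euc d → Euc d → ℝ) (ψp ψm : Euc d → ℝ)
    (π : Measure (Euc d × Euc d)) : ℝ :=
  (∫ p, c p.1 p.2 ∂π) + (∫ x in frontier Ω, ψp x ∂(π.map Prod.fst))
    - ∫ y in frontier Ω, ψm y ∂(π.map Prod.snd)

/-- removing the boundary-to-boundary part of a plan keeps it admissible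
and does not increase the tariff cost, thanks to the no-arbitrage condition. -/
theorem restrict_off_boundary_decreases_cost (Ω : Set (Euc d)) (hΩ : IsCompact Ω)
    (c : Euc d → Euc d → ℝ) (hc : ContinuousOn (fun p : Euc d × Euc d => c p.1 p.2) (Ω ×ˢ Ω))
    (ψp ψm : Euc d → ℝ)
    (hψp : ContinuousOn ψp (frontier Ω)) (hψm : ContinuousOn ψm (frontier Ω))
    (noarb : ∀ x ∈ frontier Ω, ∀ y ∈ frontier Ω, ψm y - ψp x ≤ c x y)
    (μp μm : Measure (Euc d)) [IsFiniteMeasure μp] [IsFiniteMeasure μm]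
    (π : Measure (Euc d × Euc d)) (hπ : π ∈ P0 Ω μp μm) :
    π.restrict ((frontier Ω ×ˢ frontier Ω)ᶜ) ∈ P0 Ω μp μm ∧
      tariffCost Ω c ψp ψm (π.restrict ((frontier Ω ×ˢ frontier Ω)ᶜ)) ≤
        tariffCost Ω c ψp ψm π := by
  classical
  obtain ⟨hfin, hnull, hmx, hmy⟩ := hπ
  haveI := hfin
  have hFm : MeasurableSet (frontier Ω) := isClosed_frontier.measurableSet
  have hBm : MeasurableSet (frontier Ω ×ˢ frontier Ω) := hFm.prod hFm
  set F := frontier Ω with hFdef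
  set σ := π.restrict (F ×ˢ F) with hσdef
  set τ := π.restrict ((F ×ˢ F)ᶜ) with hτdef
  have hsum : σ + τ = π := Measure.restrict_add_restrict_compl hBm
  have hΩc : IsClosed Ω := hΩ.isClosed
  have hΩm : MeasurableSet (Ω ×ˢ Ω) := (hΩc.measurableSet).prod hΩc.measurableSet
  -- a.e. membership of π in Ω ×ˢ Ω
  have hae : ∀ᵐ p ∂π, p ∈ Ω ×ˢ Ω := by
    rw [MeasureTheory.ae_iff]
    exact hnull
  have hres : π.restrict (Ω ×ˢ Ω) = π := Measure.restrict_eq_self_of_ae_mem hae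
  -- compactness facts
  have hFc : IsCompact F := hΩ.of_isClosed_subset isClosed_frontier
    (by rw [hFdef]; exact frontier_subset_closure.trans hΩc.closure_eq.subset)
  have hFsub : F ⊆ Ω := by rw [hFdef]; exact frontier_subset_closure.trans hΩc.closure_eq.subset
  -- integrability of c w.r.t. π
  obtain ⟨M, hM⟩ := (hΩ.prod hΩ).exists_bound_of_continuousOn hc
  have hcsm : AEStronglyMeasurable (fun p : Euc d × Euc d => c p.1 p.2) π := by
    have : AEStronglyMeasurable (fun p : Euc d × Euc d => c p.1 p.2) (π.restrict (Ω ×ˢ Ω)) :=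
      (hc.aemeasurable hΩm :
        AEMeasurable (fun p : Euc d × Euc d => c p.1 p.2) (π.restrict (Ω ×ˢ Ω))).aestronglyMeasurable
    rwa [hres] at this
  have hcint : Integrable (fun p : Euc d × Euc d => c p.1 p.2) π :=
    ⟨hcsm, HasFiniteIntegral.of_bounded (hae.mono fun p hp => hM p hp)⟩
  -- finiteness instances
  haveI : IsFiniteMeasure σ := inferInstance
  haveI : IsFiniteMeasure τ := inferInstance
  haveI hfinmap : ∀ ρ : Measure (Euc d × Euc d), [IsFiniteMeasure ρ] →
      ∀ f : Euc d × Euc d → Euc d, Measurable f → IsFiniteMeasure (ρ.map f) := by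
    intro ρ hρ f hf
    exact ⟨by rw [Measure.map_apply hf MeasurableSet.univ]; exact measure_lt_top ρ _⟩
  haveI : IsFiniteMeasure (π.map Prod.fst) := hfinmap π _ measurable_fst
  haveI : IsFiniteMeasure (π.map Prod.snd) := hfinmap π _ measurable_snd
  haveI : IsFiniteMeasure (σ.map Prod.fst) := hfinmap σ _ measurable_fst
  haveI : IsFiniteMeasure (σ.map Prod.snd) := hfinmap σ _ measurable_snd
  haveI : IsFiniteMeasure (τ.map Prod.fst) := hfinmap τ _ measurable_fst
  haveI : IsFiniteMeasure (τ.map Prod.snd) := hfinmap τ _ measurable_snd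
  -- bounds for ψp, ψm
  obtain ⟨Mp, hMp⟩ := hFc.exists_bound_of_continuousOn hψp
  obtain ⟨Mm, hMm⟩ := hFc.exists_bound_of_continuousOn hψm
  -- integrability of ψp, ψm on F w.r.t. restricted maps
  have hψpint : ∀ ρ : Measure (Euc d), IsFiniteMeasure ρ → Integrable ψp (ρ.restrict F) := by
    intro ρ hρ
    haveI := hρ
    exact ⟨(hψp.aemeasurable hFm).aestronglyMeasurable,
      HasFiniteIntegral.of_bounded ((ae_restrict_mem hFm).mono fun x hx => hMp x hx)⟩
  have hψmint : ∀ ρ : Measure (Euc d), IsFiniteMeasure ρ → Integrable ψm (ρ.restrict F) := by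
    intro ρ hρ
    haveI := hρ
    exact ⟨(hψm.aemeasurable hFm).aestronglyMeasurable,
      HasFiniteIntegral.of_bounded ((ae_restrict_mem hFm).mono fun x hx => hMm x hx)⟩
  -- admissibility of τ
  have hτmem : τ ∈ P0 Ω μp μm := by
    refine ⟨inferInstance, ?_, ?_, ?_⟩
    · rw [hτdef, Measure.restrict_apply hΩm.compl]
      exact measure_mono_null inter_subset_left hnull
    · rw [← hmx]
      ext s hs
      have hsm : MeasurableSet (s ∩ interior Ω) := hs.inter measurableSet_interior
      rw [Measure.restrict_apply hs, Measure.restrict_apply hs,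
        Measure.map_apply measurable_fst hsm, Measure.map_apply measurable_fst hsm,
        hτdef, Measure.restrict_apply (measurable_fst hsm)]
      congr 1
      rw [inter_eq_left]
      intro p hp hpB
      exact disjoint_interior_frontier.ne_of_mem hp.2 hpB.1 rfl
    · rw [← hmy]
      ext s hs
      have hsm : MeasurableSet (s ∩ interior Ω) := hs.inter measurableSet_interior
      rw [Measure.restrict_apply hs, Measure.restrict_apply hs,
        Measure.map_apply measurable_snd hsm, Measure.map_apply measurable_snd hsm,
        hτdef, Measure.restrict_apply (measurable_snd hsm)]
      congr 1
      rw [inter_eq_left]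
      intro p hp hpB
      exact disjoint_interior_frontier.ne_of_mem hp.2 hpB.2 rfl
  refine ⟨hτmem, ?_⟩
  -- σ lives on F ×ˢ F
  have hσae : ∀ᵐ p ∂σ, p ∈ F ×ˢ F := ae_restrict_mem hBm
  have hσFx : (σ.map Prod.fst).restrict F = σ.map Prod.fst := by
    refine Measure.restrict_eq_self_of_ae_mem ?_
    exact (MeasureTheory.ae_map_iff measurable_fst.aemeasurable hFm).2
      (hσae.mono fun p hp => hp.1)
  have hσFy : (σ.map Prod.snd).restrict F = σ.map Prod.snd := by
    refine Measure.restrict_eq_self_of_ae_mem ?_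
    exact (MeasureTheory.ae_map_iff measurable_snd.aemeasurable hFm).2
      (hσae.mono fun p hp => hp.2)
  -- strong measurability of ψp, ψm w.r.t. σ-maps
  have hψpsm : AEStronglyMeasurable ψp (σ.map Prod.fst) := by
    have : AEStronglyMeasurable ψp ((σ.map Prod.fst).restrict F) :=
      ((hψp.aemeasurable hFm : AEMeasurable ψp ((σ.map Prod.fst).restrict F))).aestronglyMeasurable
    rwa [hσFx] at this
  have hψmsm : AEStronglyMeasurable ψm (σ.map Prod.snd) := by
    have : AEStronglyMeasurable ψm ((σ.map Prod.snd).restrict F) :=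
      ((hψm.aemeasurable hFm : AEMeasurable ψm ((σ.map Prod.snd).restrict F))).aestronglyMeasurable
    rwa [hσFy] at this
  -- integral splits
  have hcσ : Integrable (fun p : Euc d × Euc d => c p.1 p.2) σ := hcint.restrict
  have hcτ : Integrable (fun p : Euc d × Euc d => c p.1 p.2) τ := hcint.restrict
  have hsplitc : (∫ p, c p.1 p.2 ∂π) = (∫ p, c p.1 p.2 ∂σ) + ∫ p, c p.1 p.2 ∂τ := by
    rw [← hsum]; exact integral_add_measure hcσ hcτ
  have hmapsum : ∀ f : Euc d × Euc d → Euc d, Measurable f →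
      (π.map f).restrict F = (σ.map f).restrict F + (τ.map f).restrict F := by
    intro f hf
    rw [← hsum, Measure.map_add _ _ hf, Measure.restrict_add]
  have hsplitp : (∫ x in F, ψp x ∂(π.map Prod.fst))
      = (∫ x in F, ψp x ∂(σ.map Prod.fst)) + ∫ x in F, ψp x ∂(τ.map Prod.fst) := by
    rw [hmapsum _ measurable_fst]
    exact integral_add_measure (hψpint _ inferInstance) (hψpint _ inferInstance)
  have hsplitm : (∫ y in F, ψm y ∂(π.map Prod.snd))
      = (∫ y in F, ψm y ∂(σ.map Prod.snd)) + ∫ y in F, ψm y ∂(τ.map Prod.snd) := by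
    rw [hmapsum _ measurable_snd]
    exact integral_add_measure (hψmint _ inferInstance) (hψmint _ inferInstance)
  -- rewrite σ boundary integrals as integrals over σ
  have hmapp : (∫ x in F, ψp x ∂(σ.map Prod.fst)) = ∫ p, ψp p.1 ∂σ := by
    rw [hσFx, integral_map measurable_fst.aemeasurable hψpsm]
  have hmapm : (∫ y in F, ψm y ∂(σ.map Prod.snd)) = ∫ p, ψm p.2 ∂σ := by
    rw [hσFy, integral_map measurable_snd.aemeasurable hψmsm]
  -- integrability of compositions w.r.t. σ
  have hψpcomp : Integrable (fun p : Euc d × Euc d => ψp p.1) σ :=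
    ⟨hψpsm.comp_aemeasurable measurable_fst.aemeasurable,
      HasFiniteIntegral.of_bounded (hσae.mono fun p hp => hMp _ hp.1)⟩
  have hψmcomp : Integrable (fun p : Euc d × Euc d => ψm p.2) σ :=
    ⟨hψmsm.comp_aemeasurable measurable_snd.aemeasurable,
      HasFiniteIntegral.of_bounded (hσae.mono fun p hp => hMm _ hp.2)⟩
  -- key nonnegativity
  have hkey : 0 ≤ (∫ p, c p.1 p.2 ∂σ) + (∫ p, ψp p.1 ∂σ) - ∫ p, ψm p.2 ∂σ := by
    have h1 : (∫ p, c p.1 p.2 ∂σ) + (∫ p, ψp p.1 ∂σ) - ∫ p, ψm p.2 ∂σ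
        = ∫ p, (c p.1 p.2 + ψp p.1 - ψm p.2) ∂σ := by
      have haddint : Integrable (fun p : Euc d × Euc d => c p.1 p.2 + ψp p.1) σ :=
        hcσ.add hψpcomp
      rw [integral_sub haddint hψmcomp, integral_add hcσ hψpcomp]
    rw [h1]
    refine integral_nonneg_of_ae (hσae.mono fun p hp => ?_)
    have := noarb p.1 hp.1 p.2 hp.2
    simp only [Pi.zero_apply]
    linarith
  simp only [tariffCost]
  rw [hsplitc, hsplitp, hsplitm, hmapp, hmapm]
  linarith
end
end

section
/- In the one-dimensional example with g strictly convex, the total cost of the ansatz transport (exporting mass [0,x₁) to the boundary point 0, transporting [x₁,1] to [1,2−x₁] by the shift x ↦ x+1−x₁, and importing (2−x₁,2] from the boundary point 2) equals F(x₁) = x₁(p⁻+p⁺) + 2∫₀^{x₁} g(x) dx + (1−x₁) g(1−x₁), and the first-order optimality condition F'(x₁) = 0 is equivalent to φ⁻(2) = p⁺ where φ⁻ is the associated dual potential. -/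
open Set intervalIntegral

noncomputable section

/-- Section 7: the total cost of the ansatz transport is
`F(x₁) = x₁(p⁻+p⁺) + 2∫₀^{x₁} g + (1−x₁) g(1−x₁)`, its derivative is
`F'(x₁) = p⁻ + p⁺ + 2g(x₁) − g(1−x₁) − (1−x₁)g'(1−x₁)`, and the first-order optimality
condition `F'(x₁) = 0` is equivalent to `φ⁻(2) = p⁺` for the associated dual potential
`φ⁻(2) = −p⁻ − 2g(x₁) + g(1−x₁) + g'(1−x₁)(1−x₁)`. -/
theorem one_dim_optimality_condition (g : ℝ → ℝ) (hg : ContDiff ℝ 1 g)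
    (hconv : StrictConvexOn ℝ (Ici 0) g) (hmono : StrictMonoOn g (Ici 0))
    (hg0 : g 0 = 0) (pm pp : ℝ)
    (F : ℝ → ℝ)
    (hF : F = fun s => s * (pm + pp) + 2 * (∫ t in (0 : ℝ)..s, g t) + (1 - s) * g (1 - s))
    (x₁ : ℝ) (hx₁ : x₁ ∈ Ioo (0 : ℝ) 1) :
    HasDerivAt F
      (pm + pp + 2 * g x₁ - g (1 - x₁) - (1 - x₁) * deriv g (1 - x₁)) x₁ ∧
    (pm + pp + 2 * g x₁ - g (1 - x₁) - (1 - x₁) * deriv g (1 - x₁) = 0 ↔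
      -pm - 2 * g x₁ + g (1 - x₁) + deriv g (1 - x₁) * (1 - x₁) = pp) := by
  constructor
  · subst hF
    have hgc : Continuous g := hg.continuous
    have h1 : HasDerivAt (fun s : ℝ => ∫ t in (0:ℝ)..s, g t) (g x₁) x₁ :=
      (hgc.integral_hasStrictDerivAt 0 x₁).hasDerivAt
    have hdg : HasDerivAt g (deriv g (1 - x₁)) (1 - x₁) :=
      ((hg.differentiable one_ne_zero) (1 - x₁)).hasDerivAt
    have h2 : HasDerivAt (fun s : ℝ => g (1 - s)) (-(deriv g (1 - x₁))) x₁ := by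
      have := hdg.comp x₁ ((hasDerivAt_id x₁).const_sub 1)
      simpa [Function.comp_def] using this
    have h3 : HasDerivAt (fun s : ℝ => (1 - s) * g (1 - s))
        ((-1) * g (1 - x₁) + (1 - x₁) * (-(deriv g (1 - x₁)))) x₁ :=
      ((hasDerivAt_id x₁).const_sub 1).mul h2
    have h4 := (((hasDerivAt_id x₁).mul_const (pm + pp)).add (h1.const_mul 2)).add h3
    exact h4.congr_deriv (by ring)
  · constructor <;> intro h <;> linarith
end
end
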